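/- arXiv:2312.03021 — 3 statements merged into one kernel-verified Lean document; each statement's English description precedes it below -/
import Mathlib

section
/- For all integers m ≥ 1, k ≥ 0 and all real T ≥ 6m(m+k), one has m!(m+k)! · ∑_{ℓ=0}^{m} T^ℓ / (ℓ!(k+ℓ)!) ≤ log(m+2) · log(m+k+2) · T^m. -/
/-- `(ℓ + d)! ≤ ℓ! * (ℓ + d)^d`. -/
lemma fact_le_fact_mul_pow (ℓ d : ℕ) :
    (ℓ + d).factorial ≤ ℓ.factorial * (ℓ + d) ^ d := by
  induction d with
  | zero => simp
  | succ n ih =>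
      have h1 : (ℓ + (n + 1)).factorial = (ℓ + n + 1) * (ℓ + n).factorial := by
        rw [← Nat.add_assoc, Nat.factorial_succ]
      rw [h1]
      calc (ℓ + n + 1) * (ℓ + n).factorial
          ≤ (ℓ + n + 1) * (ℓ.factorial * (ℓ + n) ^ n) :=
            Nat.mul_le_mul_left _ ih
        _ ≤ (ℓ + n + 1) * (ℓ.factorial * (ℓ + n + 1) ^ n) := by
            have : (ℓ + n) ^ n ≤ (ℓ + n + 1) ^ n :=
              Nat.pow_le_pow_left (Nat.le_succ _) n
            exact Nat.mul_le_mul_left _ (Nat.mul_le_mul_left _ this)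
        _ = ℓ.factorial * (ℓ + (n + 1)) ^ (n + 1) := by ring_nf
      
lemma log_three_lb : (1.081 : ℝ) ≤ Real.log 3 := by
  rw [Real.le_log_iff_exp_le (by norm_num)]
  have h1 : Real.exp 1 < 2.7182818286 := Real.exp_one_lt_d9
  have h2 : Real.exp (0.081 : ℝ) ≤ (0.919 : ℝ)⁻¹ := by
    have := Real.add_one_le_exp (-0.081 : ℝ)
    rw [Real.exp_neg] at this
    rw [le_inv_comm₀ (Real.exp_pos _) (by norm_num)] at *
    linarith
  have h3 : (1.081 : ℝ) = 1 + 0.081 := by norm_num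
  rw [h3, Real.exp_add]
  calc Real.exp 1 * Real.exp 0.081 ≤ 2.7182818286 * (0.919 : ℝ)⁻¹ := by
        apply mul_le_mul h1.le h2 (Real.exp_pos _).le (by norm_num)
    _ ≤ 3 := by norm_num

/-- For integers `m ≥ 1`, `k ≥ 0` and real `T ≥ 6m(m+k)`,
`m!(m+k)! ⬝ ∑_{ℓ=0}^{m} T^ℓ/(ℓ!(k+ℓ)!) ≤ log(m+2) ⬝ log(m+k+2) ⬝ T^m`. -/
theorem stmt_3 (m k : ℕ) (hm : 1 ≤ m) (T : ℝ) (hT : 6 * m * (m + k) ≤ T) :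
    (m.factorial : ℝ) * ((m + k).factorial : ℝ) *
        ∑ ℓ ∈ Finset.range (m + 1), T ^ ℓ / ((ℓ.factorial : ℝ) * ((k + ℓ).factorial : ℝ)) ≤
      Real.log (m + 2) * Real.log (m + k + 2) * T ^ m := by
  have hm1 : (1 : ℝ) ≤ (m : ℝ) := by exact_mod_cast hm
  have hmk1 : (1 : ℝ) ≤ (m : ℝ) + (k : ℝ) := by
    have : (0:ℝ) ≤ (k:ℝ) := Nat.cast_nonneg k
    linarith
  have hT6 : (6 : ℝ) ≤ T := by nlinarith
  have hTpos : (0 : ℝ) < T := by linarith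
  have hratio : (m : ℝ) * ((m : ℝ) + (k : ℝ)) ≤ 6⁻¹ * T := by nlinarith
  -- per-term bound
  have hterm : ∀ ℓ ∈ Finset.range (m + 1),
      (m.factorial : ℝ) * ((m + k).factorial : ℝ) *
        (T ^ ℓ / ((ℓ.factorial : ℝ) * ((k + ℓ).factorial : ℝ)))
      ≤ (6 : ℝ)⁻¹ ^ (m - ℓ) * T ^ m := by
    intro ℓ hℓ
    have hℓm : ℓ ≤ m := Nat.lt_succ_iff.mp (Finset.mem_range.mp hℓ)
    set d := m - ℓ with hdset
    have hd : ℓ + d = m := Nat.add_sub_cancel' hℓm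
    have hDpos : (0 : ℝ) < (ℓ.factorial : ℝ) * ((k + ℓ).factorial : ℝ) := by
      positivity
    rw [mul_div_assoc', div_le_iff₀ hDpos]
    have h1 : (m.factorial : ℝ) ≤ (ℓ.factorial : ℝ) * (m : ℝ) ^ d := by
      have := fact_le_fact_mul_pow ℓ d
      rw [hd] at this
      exact_mod_cast this
    have h2 : ((m + k).factorial : ℝ) ≤ ((k + ℓ).factorial : ℝ) * ((m : ℝ) + (k : ℝ)) ^ d := by
      have := fact_le_fact_mul_pow (k + ℓ) d
      have heq : k + ℓ + d = m + k := by omega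
      rw [heq] at this
      have := (Nat.cast_le (α := ℝ)).mpr this
      push_cast at this ⊢
      convert this using 3 <;> ring
    have hinner : ((m : ℝ) * ((m : ℝ) + (k : ℝ))) ^ d * T ^ ℓ ≤ (6 : ℝ)⁻¹ ^ d * T ^ m := by
      have hp : ((m : ℝ) * ((m : ℝ) + (k : ℝ))) ^ d ≤ (6⁻¹ * T) ^ d :=
        pow_le_pow_left₀ (by positivity) hratio d
      calc ((m : ℝ) * ((m : ℝ) + (k : ℝ))) ^ d * T ^ ℓ
          ≤ (6⁻¹ * T) ^ d * T ^ ℓ := by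
            exact mul_le_mul_of_nonneg_right hp (by positivity)
        _ = (6 : ℝ)⁻¹ ^ d * (T ^ d * T ^ ℓ) := by rw [mul_pow]; ring
        _ = (6 : ℝ)⁻¹ ^ d * T ^ m := by rw [← pow_add, Nat.add_comm ℓ d] at *; rw [hd]
    calc (m.factorial : ℝ) * ((m + k).factorial : ℝ) * T ^ ℓ
        ≤ ((ℓ.factorial : ℝ) * (m : ℝ) ^ d) * (((k + ℓ).factorial : ℝ) * ((m : ℝ) + (k : ℝ)) ^ d) * T ^ ℓ := by
          have hA : (0:ℝ) ≤ (m.factorial : ℝ) := by positivity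
          have hB : (0:ℝ) ≤ ((ℓ.factorial : ℝ) * (m : ℝ) ^ d) := by positivity
          exact mul_le_mul_of_nonneg_right (mul_le_mul h1 h2 (by positivity) hB) (by positivity)
      _ = ((ℓ.factorial : ℝ) * ((k + ℓ).factorial : ℝ)) * (((m : ℝ) * ((m : ℝ) + (k : ℝ))) ^ d * T ^ ℓ) := by
          rw [mul_pow]; ring
      _ ≤ ((ℓ.factorial : ℝ) * ((k + ℓ).factorial : ℝ)) * ((6 : ℝ)⁻¹ ^ d * T ^ m) :=
          mul_le_mul_of_nonneg_left hinner hDpos.le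
      _ = (6 : ℝ)⁻¹ ^ d * T ^ m * ((ℓ.factorial : ℝ) * ((k + ℓ).factorial : ℝ)) := by ring
  -- sum bound
  have hsum : (m.factorial : ℝ) * ((m + k).factorial : ℝ) *
        ∑ ℓ ∈ Finset.range (m + 1), T ^ ℓ / ((ℓ.factorial : ℝ) * ((k + ℓ).factorial : ℝ))
      ≤ (∑ j ∈ Finset.range (m + 1), (6 : ℝ)⁻¹ ^ j) * T ^ m := by
    rw [Finset.mul_sum]
    calc ∑ ℓ ∈ Finset.range (m + 1), (m.factorial : ℝ) * ((m + k).factorial : ℝ) *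
            (T ^ ℓ / ((ℓ.factorial : ℝ) * ((k + ℓ).factorial : ℝ)))
        ≤ ∑ ℓ ∈ Finset.range (m + 1), (6 : ℝ)⁻¹ ^ (m - ℓ) * T ^ m :=
          Finset.sum_le_sum hterm
      _ = (∑ ℓ ∈ Finset.range (m + 1), (6 : ℝ)⁻¹ ^ (m - ℓ)) * T ^ m := by
          rw [← Finset.sum_mul]
      _ = (∑ j ∈ Finset.range (m + 1), (6 : ℝ)⁻¹ ^ j) * T ^ m := by
          congr 1
          have := Finset.sum_range_reflect (fun j => (6 : ℝ)⁻¹ ^ j) (m + 1)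
          simpa using this
  refine hsum.trans ?_
  apply mul_le_mul_of_nonneg_right _ (by positivity)
  -- need : geometric sum ≤ log product
  by_cases hm2 : m = 1
  · subst hm2
    have hS : (∑ j ∈ Finset.range 2, (6 : ℝ)⁻¹ ^ j) = 7/6 := by
      simp [Finset.sum_range_succ]; norm_num
    rw [hS]
    have hl1 : (1.081 : ℝ) ≤ Real.log ((1 : ℕ) + 2 : ℝ) := by
      have h13 : ((1:ℕ):ℝ) + 2 = 3 := by norm_num
      rw [h13]; exact log_three_lb
    have hl2 : (1.081 : ℝ) ≤ Real.log ((1 : ℕ) + (k : ℝ) + 2) := by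
      refine le_trans log_three_lb (Real.log_le_log (by norm_num) ?_)
      have : (0:ℝ) ≤ (k:ℝ) := Nat.cast_nonneg k
      push_cast
      linarith
    push_cast at hl1 hl2 ⊢
    nlinarith [hl1, hl2]
  · have hm2' : 2 ≤ m := by omega
    have hS : (∑ j ∈ Finset.range (m + 1), (6 : ℝ)⁻¹ ^ j) ≤ 6/5 := by
      rw [geom_sum_eq (by norm_num : (6:ℝ)⁻¹ ≠ 1)]
      have h6 : (0:ℝ) ≤ (6:ℝ)⁻¹ ^ (m+1) := by positivity
      rw [div_le_iff_of_neg (by norm_num : (6:ℝ)⁻¹ - 1 < 0)]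
      linarith
    refine hS.trans ?_
    have hlog2 : (0.6931471803 : ℝ) < Real.log 2 := Real.log_two_gt_d9
    have h4 : (1.386 : ℝ) ≤ Real.log 4 := by
      have : (4:ℝ) = 2^2 := by norm_num
      rw [this, Real.log_pow]
      push_cast
      linarith
    have hl1 : (1.386 : ℝ) ≤ Real.log ((m : ℝ) + 2) := by
      refine h4.trans (Real.log_le_log (by norm_num) ?_)
      have : (2:ℝ) ≤ (m:ℝ) := by exact_mod_cast hm2'
      linarith
    have hl2 : (1.386 : ℝ) ≤ Real.log ((m : ℝ) + (k : ℝ) + 2) := by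
      refine h4.trans (Real.log_le_log (by norm_num) ?_)
      have : (2:ℝ) ≤ (m:ℝ) := by exact_mod_cast hm2'
      have : (0:ℝ) ≤ (k:ℝ) := Nat.cast_nonneg k
      linarith
    nlinarith [hl1, hl2]
end

section
/- For every real α ≥ 1, ∑_{j=0}^{∞} log(j + α) / (j² + 4) ≤ (5/2) · log(α + 1). -/
/-!
Since `2 (j + α) ≤ (α + 1) (j + 2)` with `α + 1, j + 2 ≥ 2`, we get
`log (j + α) / log (α + 1) ≤ log (j + 2) / log 2`, so the claim reduces to the numerical bound
`∑ log (j + 2) / (j ^ 2 + 4) ≤ (5/2) log 2` (about `1.35 ≤ 1.73`). For that, the first three terms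
are summed exactly and the tail `j ≥ 3` is bounded by a telescoping majorant
`(log (t + 1) + 1) / (t - 1/2)`; with `log 3 ≤ log 4` all that is left is `log 2 > 1/2`.
-/

open Real Finset

theorem sum_range_le_sum_range_add_of_le_sub_succ {f g : ℕ → ℝ} {m : ℕ} (hf : ∀ j, 0 ≤ f j)
    (hg : ∀ j, m ≤ j → 0 ≤ g j) (hfg : ∀ j, m ≤ j → f j ≤ g j - g (j + 1)) (n : ℕ) :
    ∑ j ∈ range n, f j ≤ ∑ j ∈ range m, f j + g m := by
  have telescope : ∀ n, m ≤ n → ∑ j ∈ range n, f j + g n ≤ ∑ j ∈ range m, f j + g m := by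
    intro n hmn
    induction n, hmn using Nat.le_induction with
    | base => exact le_rfl
    | succ n hmn ih => rw [sum_range_succ]; linarith [hfg n hmn]
  rcases le_total m n with hmn | hnm
  · linarith [telescope n hmn, hg n hmn]
  · linarith [sum_le_sum_of_subset_of_nonneg (range_subset_range.2 hnm) fun j _ _ ↦ hf j,
      hg m le_rfl]

theorem log_two_mul_log_le_log_mul_log {a b c : ℝ} (ha : 2 ≤ a) (hb : 2 ≤ b) (hc : 0 < c)
    (habc : 2 * c ≤ a * b) : log 2 * log c ≤ log a * log b := by
  have hlog : log 2 + log c ≤ log a + log b := by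
    rw [← log_mul two_ne_zero hc.ne', ← log_mul (by linarith) (by linarith)]
    exact log_le_log (by positivity) habc
  have hu : 0 ≤ log a - log 2 := sub_nonneg.2 (log_le_log two_pos ha)
  have hv : 0 ≤ log b - log 2 := sub_nonneg.2 (log_le_log two_pos hb)
  nlinarith [mul_nonneg hu hv, log_pos one_lt_two]

theorem log_add_le_div_log_two_mul {α x : ℝ} (hα : 1 ≤ α) (hx : 0 ≤ x) :
    log (x + α) ≤ log (α + 1) / log 2 * log (x + 2) := by
  rw [div_mul_eq_mul_div, le_div_iff₀ (log_pos one_lt_two), mul_comm]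
  exact log_two_mul_log_le_log_mul_log (by linarith) (by linarith) (by linarith) (by nlinarith)

theorem log_add_two_sub_log_add_one_le {t : ℝ} (ht : -1 < t) :
    log (t + 2) - log (t + 1) ≤ 1 / (t + 1) := by
  have ht1 : 0 < t + 1 := by linarith
  rw [← log_div (by linarith) ht1.ne']
  calc log ((t + 2) / (t + 1)) ≤ (t + 2) / (t + 1) - 1 :=
        log_le_sub_one_of_pos (div_pos (by linarith) ht1)
    _ = 1 / (t + 1) := by field_simp; ring

noncomputable def logTailMajorant (t : ℝ) : ℝ := (log (t + 1) + 1) / (t - 1 / 2)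

theorem log_add_two_div_le_logTailMajorant_sub {t : ℝ} (ht : 1 / 2 < t) :
    log (t + 2) / (t ^ 2 + 4) ≤ logTailMajorant t - logTailMajorant (t + 1) := by
  have hden : 0 < (t - 1 / 2) * (t + 1 / 2) := by nlinarith
  have hlog : 0 ≤ log (t + 2) := log_nonneg (by linarith)
  have hstep := log_add_two_sub_log_add_one_le (t := t) (by linarith)
  have hstep' : (t + 1 / 2) * (log (t + 2) - log (t + 1)) ≤ 1 := by
    calc (t + 1 / 2) * (log (t + 2) - log (t + 1)) ≤ (t + 1 / 2) * (1 / (t + 1)) :=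
          mul_le_mul_of_nonneg_left hstep (by linarith)
      _ ≤ 1 := by rw [mul_one_div, div_le_one (by linarith)]; linarith
  have hdiff : logTailMajorant t - logTailMajorant (t + 1) =
      (log (t + 2) + 1 - (t + 1 / 2) * (log (t + 2) - log (t + 1))) /
        ((t - 1 / 2) * (t + 1 / 2)) := by
    unfold logTailMajorant
    rw [show t + 1 + 1 = t + 2 by ring, show t + 1 - 1 / 2 = t + 1 / 2 by ring,
      div_sub_div _ _ (by linarith) (by linarith)]
    ring
  calc log (t + 2) / (t ^ 2 + 4) ≤ log (t + 2) / ((t - 1 / 2) * (t + 1 / 2)) :=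
        div_le_div_of_nonneg_left hlog hden (by nlinarith)
    _ ≤ _ := by rw [hdiff]; gcongr; linarith

theorem sum_range_log_add_two_div_le (n : ℕ) :
    ∑ j ∈ range n, log ((j : ℝ) + 2) / ((j : ℝ) ^ 2 + 4) ≤ 5 / 2 * log 2 := by
  have htail := sum_range_le_sum_range_add_of_le_sub_succ (m := 3)
    (f := fun j : ℕ ↦ log ((j : ℝ) + 2) / ((j : ℝ) ^ 2 + 4)) (g := fun j ↦ logTailMajorant j)
    (fun j ↦ div_nonneg (log_nonneg (by linarith [j.cast_nonneg (α := ℝ)])) (by positivity))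
    (fun j hj ↦ by
      have : (3 : ℝ) ≤ j := by exact_mod_cast hj
      exact div_nonneg (by linarith [log_nonneg (show (1 : ℝ) ≤ j + 1 by linarith)])
        (by linarith))
    (fun j hj ↦ by
      have : (3 : ℝ) ≤ j := by exact_mod_cast hj
      simpa using log_add_two_div_le_logTailMajorant_sub (t := j) (by linarith)) n
  have hlog4 : log 4 = 2 * log 2 := by
    rw [show (4 : ℝ) = 2 ^ 2 by norm_num, log_pow]; norm_num
  have hlog3 : log 3 ≤ 2 * log 2 := hlog4 ▸ log_le_log (by norm_num) (by norm_num)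
  norm_num [sum_range_succ, logTailMajorant, hlog4] at htail
  linarith [log_two_gt_d9]

/-- For every real `α ≥ 1`, `∑_{j=0}^{∞} log(j + α)/(j² + 4) ≤ (5/2) log(α + 1)`. -/
theorem stmt_16 (α : ℝ) (hα : 1 ≤ α) :
    ∑' j : ℕ, Real.log (j + α) / ((j : ℝ) ^ 2 + 4) ≤ 5 / 2 * Real.log (α + 1) := by
  have hratio : 0 ≤ log (α + 1) / log 2 :=
    div_nonneg (log_nonneg (by linarith)) (log_pos one_lt_two).le
  refine tsum_le_of_sum_range_le (fun j ↦ div_nonneg (log_nonneg (by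
    linarith [j.cast_nonneg (α := ℝ)])) (by positivity)) fun n ↦ ?_
  calc ∑ j ∈ range n, log (j + α) / ((j : ℝ) ^ 2 + 4)
      ≤ ∑ j ∈ range n, log (α + 1) / log 2 * (log (j + 2) / ((j : ℝ) ^ 2 + 4)) := by
        gcongr with j
        rw [← mul_div_assoc]
        gcongr
        exact log_add_le_div_log_two_mul hα j.cast_nonneg
    _ = log (α + 1) / log 2 * ∑ j ∈ range n, log (j + 2) / ((j : ℝ) ^ 2 + 4) := by
        rw [mul_sum]
    _ ≤ log (α + 1) / log 2 * (5 / 2 * log 2) := by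
        gcongr; exact sum_range_log_add_two_div_le n
    _ = 5 / 2 * log (α + 1) := by field_simp
end

section
/- Let ψ(X) = ∑_{j ≤ X} A(j) · j^ℓ and θ(X) = ∑_{p ≤ X} A(p) · p^ℓ (the second sum only over primes), where |A(j)| ≤ 4·Λ(j) for all j, Λ the von Mangoldt function, and ℓ ≥ 0 an integer. Then for X ≥ 2, |ψ(X) − θ(X)| ≤ 4 · ∑_{m≥2} ∑_{p ≤ X^{1/m}} p^{ℓm} log(p) ≤ 26.72 · X^{ℓ+1/2} · log(X). -/
/-!
Only prime powers `p ^ k` with `k ≥ 2` contribute to `ψ - θ`, with weight at most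
`4 Λ(p ^ k) p ^ (ℓ k) = 4 p ^ (ℓ k) log p`. Grouping them by the exponent `k` gives the layers
`θ_{ℓ k}(X ^ (1/k))`, where `θ_n(Y) = ∑_{p ≤ Y} p ^ n log p`; a layer is empty once `2 ^ k > X`,
so only `2 ≤ k ≤ log X / log 2` occur. The Rosser–Schoenfeld bound makes each layer at most
`2.01 X ^ (ℓ + 1/k) ≤ 2.01 X ^ (ℓ + 1/2)`, and `4 · 2.01 / log 2 < 26.72`.
-/

open Finset Real
open ArithmeticFunction hiding log

noncomputable def thetaPow (n : ℕ) (Y : ℝ) : ℝ :=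
  ∑ p ∈ (Iic ⌊Y⌋₊).filter Nat.Prime, (p : ℝ) ^ n * log p

lemma thetaPow_eq_sum_Ioc (n : ℕ) (Y : ℝ) :
    thetaPow n Y = ∑ p ∈ Ioc 0 ⌊Y⌋₊ with p.Prime, (p : ℝ) ^ n * log p := by
  refine sum_congr ?_ fun _ _ => rfl
  ext p
  simpa using fun (hp : p.Prime) _ => hp.pos

lemma thetaPow_eq_zero_of_lt_two {Y : ℝ} (hY : Y < 2) (n : ℕ) : thetaPow n Y = 0 := by
  refine sum_eq_zero fun p hp => ?_
  obtain ⟨hpY, hp⟩ := mem_filter.mp hp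
  have hY2 : ⌊Y⌋₊ < 2 := (Nat.floor_lt' two_ne_zero).mpr (mod_cast hY)
  exact absurd hp.two_le (by rw [mem_Iic] at hpY; omega)

lemma vonMangoldt_mul_pow_of_prime_pow {p : ℕ} (hp : p.Prime) {k : ℕ} (hk : k ≠ 0) (ℓ : ℕ) :
    Λ (p ^ k) * ((p ^ k : ℕ) : ℝ) ^ ℓ = (p : ℝ) ^ (ℓ * k) * log p := by
  rw [vonMangoldt_apply_pow hk, vonMangoldt_apply_prime hp]
  push_cast
  ring

theorem sum_vonMangoldt_mul_pow_nonprime {X : ℝ} (hX : 0 ≤ X) (ℓ : ℕ) :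
    ∑ j ∈ Icc 1 ⌊X⌋₊ with ¬ j.Prime, Λ j * (j : ℝ) ^ ℓ =
      ∑ k ∈ Icc 2 ⌊log X / log 2⌋₊, thetaPow (ℓ * k) (X ^ (1 / (k : ℝ))) := by
  -- `f` vanishes on primes, so the layer `k = 1` of the prime-power decomposition drops out.
  set f : ℕ → ℝ := fun j => if j.Prime then 0 else Λ j * (j : ℝ) ^ ℓ
  have hsupp : ∀ j, f j ≠ 0 → IsPrimePow j := fun j hj =>
    by_contra fun h => hj (by simp [f, vonMangoldt_eq_zero_iff.mpr h])
  calc ∑ j ∈ Icc 1 ⌊X⌋₊ with ¬ j.Prime, Λ j * (j : ℝ) ^ ℓ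
      = ∑ j ∈ Ioc 0 ⌊X⌋₊ with IsPrimePow j, f j := by
        rw [sum_filter_of_ne fun j _ => hsupp j, ← Icc_add_one_left_eq_Ioc]
        simp [f, sum_ite]
    _ = ∑ k ∈ Icc 1 ⌊log X / log 2⌋₊, ∑ p ∈ Ioc 0 ⌊X ^ (1 / (k : ℝ))⌋₊ with p.Prime, f (p ^ k) :=
        Chebyshev.sum_PrimePow_eq_sum_sum' f hX le_rfl
    _ = ∑ k ∈ Icc 2 ⌊log X / log 2⌋₊, ∑ p ∈ Ioc 0 ⌊X ^ (1 / (k : ℝ))⌋₊ with p.Prime, f (p ^ k) := by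
        refine (sum_subset (Icc_subset_Icc_left one_le_two) fun k hk hk2 => ?_).symm
        obtain rfl : k = 1 := by simp only [mem_Icc] at hk hk2; omega
        exact sum_eq_zero fun p hp => by simp [f, (mem_filter.mp hp).2]
    _ = ∑ k ∈ Icc 2 ⌊log X / log 2⌋₊, thetaPow (ℓ * k) (X ^ (1 / (k : ℝ))) := by
        refine sum_congr rfl fun k hk => ?_
        rw [thetaPow_eq_sum_Ioc]
        refine sum_congr rfl fun p hp => ?_
        have hk2 : 2 ≤ k := (mem_Icc.mp hk).1
        simp only [f, Nat.Prime.not_prime_pow hk2, if_false]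
        exact vonMangoldt_mul_pow_of_prime_pow (mem_filter.mp hp).2 (by omega) ℓ

lemma thetaPow_rpow_one_div_eq_zero {X : ℝ} (hX : 0 ≤ X) {k : ℕ} (hk : 0 < k) (hXk : X < 2 ^ k)
    (n : ℕ) : thetaPow n (X ^ (1 / (k : ℝ))) = 0 := by
  refine thetaPow_eq_zero_of_lt_two ?_ n
  rwa [one_div, rpow_inv_lt_iff_of_pos hX zero_le_two (by positivity), rpow_natCast]

theorem tsum_thetaPow_rpow_eq_sum_Icc {X : ℝ} (hX : 0 < X) (ℓ : ℕ) :
    ∑' m : ℕ, thetaPow (ℓ * (m + 2)) (X ^ (1 / ((m : ℝ) + 2))) =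
      ∑ k ∈ Icc 2 ⌊log X / log 2⌋₊, thetaPow (ℓ * k) (X ^ (1 / (k : ℝ))) := by
  set K := ⌊log X / log 2⌋₊
  rw [tsum_eq_sum (s := range (K - 1)), ← Ico_add_one_right_eq_Icc, sum_Ico_eq_sum_range]
  · refine sum_congr (congrArg range (by omega)) fun m _ => ?_
    rw [add_comm 2 m]
    push_cast
    rfl
  · intro m hm
    rw [mem_range, not_lt] at hm
    have hKm : log X / log 2 < m + 2 := by
      exact_mod_cast Nat.lt_of_floor_lt (show K < m + 2 by omega)
    have hXm : X < 2 ^ (m + 2) := by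
      refine lt_of_not_ge fun h => ?_
      rw [pow_le_iff_le_log two_pos hX, ← le_div_iff₀ (log_pos one_lt_two)] at h
      push_cast at h
      linarith
    simpa using thetaPow_rpow_one_div_eq_zero hX.le (k := m + 2) (by omega) (mod_cast hXm)
      (ℓ * (m + 2))

theorem thetaPow_rpow_one_div_le {C : ℝ} (hC : 0 ≤ C)
    (hθ : ∀ (Y : ℝ) (n : ℕ), 2 ≤ Y → thetaPow n Y ≤ C * Y ^ (n + 1))
    {X : ℝ} (hX : 1 ≤ X) (ℓ : ℕ) {k : ℕ} (hk : 2 ≤ k) :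
    thetaPow (ℓ * k) (X ^ (1 / (k : ℝ))) ≤ C * X ^ ((ℓ : ℝ) + 1 / 2) := by
  by_cases hY : 2 ≤ X ^ (1 / (k : ℝ))
  · calc thetaPow (ℓ * k) (X ^ (1 / (k : ℝ)))
        ≤ C * (X ^ (1 / (k : ℝ))) ^ (ℓ * k + 1) := hθ _ _ hY
      _ = C * X ^ ((ℓ : ℝ) + 1 / k) := by
        rw [← rpow_natCast, ← rpow_mul (by linarith)]
        congr 2
        push_cast
        field_simp
      _ ≤ C * X ^ ((ℓ : ℝ) + 1 / 2) := by
        gcongr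
        exact_mod_cast hk
  · rw [thetaPow_eq_zero_of_lt_two (not_le.mp hY)]
    positivity

theorem sum_thetaPow_rpow_le {C : ℝ} (hC : 0 ≤ C)
    (hθ : ∀ (Y : ℝ) (n : ℕ), 2 ≤ Y → thetaPow n Y ≤ C * Y ^ (n + 1))
    {X : ℝ} (hX : 1 ≤ X) (ℓ : ℕ) :
    ∑ k ∈ Icc 2 ⌊log X / log 2⌋₊, thetaPow (ℓ * k) (X ^ (1 / (k : ℝ))) ≤
      log X / log 2 * (C * X ^ ((ℓ : ℝ) + 1 / 2)) := by
  have hcard : (#(Icc 2 ⌊log X / log 2⌋₊) : ℝ) ≤ log X / log 2 := by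
    refine le_trans ?_ (Nat.floor_le (div_nonneg (log_nonneg hX) (log_nonneg one_le_two)))
    rw [Nat.card_Icc]
    exact_mod_cast Nat.sub_le_of_le_add (by omega)
  calc ∑ k ∈ Icc 2 ⌊log X / log 2⌋₊, thetaPow (ℓ * k) (X ^ (1 / (k : ℝ)))
      ≤ #(Icc 2 ⌊log X / log 2⌋₊) • (C * X ^ ((ℓ : ℝ) + 1 / 2)) :=
        sum_le_card_nsmul _ _ _ fun k hk => thetaPow_rpow_one_div_le hC hθ hX ℓ (mem_Icc.mp hk).1
    _ ≤ log X / log 2 * (C * X ^ ((ℓ : ℝ) + 1 / 2)) := by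
        rw [nsmul_eq_mul]
        gcongr

lemma abs_sum_sub_sum_prime_le {A : ℕ → ℝ} {c : ℝ} (hA : ∀ j, |A j| ≤ c * Λ j) (s : Finset ℕ)
    (ℓ : ℕ) :
    |∑ j ∈ s, A j * (j : ℝ) ^ ℓ - ∑ p ∈ s.filter Nat.Prime, A p * (p : ℝ) ^ ℓ| ≤
      c * ∑ j ∈ s with ¬ j.Prime, Λ j * (j : ℝ) ^ ℓ := by
  rw [← sum_filter_add_sum_filter_not s Nat.Prime, add_sub_cancel_left, mul_sum]
  refine (abs_sum_le_sum_abs _ _).trans (sum_le_sum fun j _ => ?_)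
  rw [abs_mul, abs_of_nonneg (by positivity : (0 : ℝ) ≤ (j : ℝ) ^ ℓ), ← mul_assoc]
  exact mul_le_mul_of_nonneg_right (hA j) (by positivity)

/-- Let `ψ(X) = ∑_{j ≤ X} A(j) j^ℓ` and `θ(X) = ∑_{p ≤ X prime} A(p) p^ℓ` where
`|A(j)| ≤ 4 Λ(j)`.  Assuming the Rosser–Schoenfeld type bound
`∑_{p ≤ Y} p^m log p ≤ 2.01 Y^{m+1}` for `Y ≥ 2`, one has, for `X ≥ 2`,
`|ψ(X) − θ(X)| ≤ 4 ∑_{m ≥ 2} ∑_{p ≤ X^{1/m}} p^{ℓ m} log p ≤ 26.72 X^{ℓ+1/2} log X`. -/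
theorem stmt_19 (A : ℕ → ℝ)
    (hA : ∀ j : ℕ, |A j| ≤ 4 * ArithmeticFunction.vonMangoldt j)
    (hRS : ∀ (Y : ℝ) (m : ℕ), 2 ≤ Y →
      ∑ p ∈ (Finset.Iic ⌊Y⌋₊).filter Nat.Prime, (p : ℝ) ^ m * Real.log p ≤
        2.01 * Y ^ (m + 1))
    (ℓ : ℕ) (X : ℝ) (hX : 2 ≤ X) :
    (|(∑ j ∈ Finset.Icc 1 ⌊X⌋₊, A j * (j : ℝ) ^ ℓ) -
        ∑ p ∈ (Finset.Icc 1 ⌊X⌋₊).filter Nat.Prime, A p * (p : ℝ) ^ ℓ| ≤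
      4 * ∑' m : ℕ,
          ∑ p ∈ (Finset.Iic ⌊X ^ (1 / ((m : ℝ) + 2))⌋₊).filter Nat.Prime,
            (p : ℝ) ^ (ℓ * (m + 2)) * Real.log p) ∧
    (4 * ∑' m : ℕ,
          ∑ p ∈ (Finset.Iic ⌊X ^ (1 / ((m : ℝ) + 2))⌋₊).filter Nat.Prime,
            (p : ℝ) ^ (ℓ * (m + 2)) * Real.log p) ≤
      26.72 * X ^ ((ℓ : ℝ) + 1 / 2) * Real.log X := by
  have hX0 : 0 < X := by linarith
  have htail : ∑' m : ℕ, ∑ p ∈ (Iic ⌊X ^ (1 / ((m : ℝ) + 2))⌋₊).filter Nat.Prime,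
      (p : ℝ) ^ (ℓ * (m + 2)) * log p =
        ∑ k ∈ Icc 2 ⌊log X / log 2⌋₊, thetaPow (ℓ * k) (X ^ (1 / (k : ℝ))) :=
    tsum_thetaPow_rpow_eq_sum_Icc hX0 ℓ
  rw [htail]
  constructor
  · rw [← sum_vonMangoldt_mul_pow_nonprime hX0.le]
    exact abs_sum_sub_sum_prime_le hA _ ℓ
  · have hconst : 4 * 2.01 / log 2 ≤ 26.72 := by
      rw [div_le_iff₀ (log_pos one_lt_two)]
      linarith [log_two_gt_d9]
    calc 4 * ∑ k ∈ Icc 2 ⌊log X / log 2⌋₊, thetaPow (ℓ * k) (X ^ (1 / (k : ℝ)))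
        ≤ 4 * (log X / log 2 * (2.01 * X ^ ((ℓ : ℝ) + 1 / 2))) := by
          gcongr
          exact sum_thetaPow_rpow_le (by norm_num) hRS (by linarith) ℓ
      _ = 4 * 2.01 / log 2 * X ^ ((ℓ : ℝ) + 1 / 2) * log X := by ring
      _ ≤ 26.72 * X ^ ((ℓ : ℝ) + 1 / 2) * log X := by
          have := log_nonneg (by linarith : (1 : ℝ) ≤ X)
          gcongr
end
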